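/- Let S be a convex cost process, D a convex portfolio constraint process, and C the set of claim processes superhedgeable with zero cost. Assume C is closed in probability, and let p ∈ M^1 satisfy −p ∈ rc C and p ∉ rc C. Let c ∈ M^1 with π(c) finite and let y ∈ M^∞ satisfy E ∑_{t=0}^T p_t y_t = 1. Then y attains the supremum in the dual representation, i.e. π(c) = E ∑_{t=0}^T c_t y_t − σ_{C¹}(y), if and only if π(c + c') − π(c) ≥ E ∑_{t=0}^T c'_t y_t for every c' ∈ M^1. -/

import Mathlib

open MeasureTheory Filter

noncomputable section

/-- The portfolio held before time `t`, with the convention `x₋₁ = 0`. -/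
def prevP {Ω : Type*} {T : ℕ} {E : Type*} [Zero E]
    (x : Fin (T + 1) → Ω → E) (t : Fin (T + 1)) : Ω → E :=
  if t.1 = 0 then 0 else x ⟨t.1 - 1, lt_of_le_of_lt (Nat.sub_le _ _) t.isLt⟩

/-- The recession cone of a set in a real vector space. -/
def rcone {V : Type*} [AddCommMonoid V] [SMul ℝ V] (A : Set V) : Set V :=
  {y | ∀ a ∈ A, ∀ α : ℝ, 0 < α → a + α • y ∈ A}

variable {Ω : Type*} {m0 : MeasurableSpace Ω} {T : ℕ} {J : Type*} [Fintype J]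

/-- A convex cost process: `S t · ω` is convex, lsc, vanishes at `0`, never `-∞`, and
`S t` is `B(ℝ^J) ⊗ ℱ t`-measurable. -/
structure CostProcess (ℱ : Filtration (Fin (T + 1)) m0) (J : Type*) [Fintype J] where
  S : Fin (T + 1) → (J → ℝ) → Ω → EReal
  ne_bot : ∀ t x ω, S t x ω ≠ ⊥
  convex : ∀ t ω (x y : J → ℝ) (a b : ℝ), 0 ≤ a → 0 ≤ b → a + b = 1 →
    S t (a • x + b • y) ω ≤ (a : EReal) * S t x ω + (b : EReal) * S t y ω
  lsc : ∀ t ω, LowerSemicontinuous fun x => S t x ω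
  zero : ∀ t ω, S t 0 ω = 0
  meas : ∀ t, Measurable[(inferInstance : MeasurableSpace (J → ℝ)).prod (ℱ t)]
    fun p : (J → ℝ) × Ω => S t p.1 p.2

/-- A convex portfolio constraint process: each `D t ω` is closed, convex, contains `0`,
and `ω ↦ D t ω` is `ℱ t`-measurable. -/
structure ConstraintProcess (ℱ : Filtration (Fin (T + 1)) m0) (J : Type*) [Fintype J] where
  D : Fin (T + 1) → Ω → Set (J → ℝ)
  closed : ∀ t ω, IsClosed (D t ω)
  convex : ∀ t ω, Convex ℝ (D t ω)
  zero_mem : ∀ t ω, (0 : J → ℝ) ∈ D t ω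
  meas : ∀ t (U : Set (J → ℝ)), IsOpen U →
    MeasurableSet[ℱ t] {ω | (D t ω ∩ U).Nonempty}

/-- The set `M` of adapted claim processes. -/
def ClaimM (ℱ : Filtration (Fin (T + 1)) m0) : Set (Fin (T + 1) → Ω → ℝ) :=
  {c | StronglyAdapted ℱ c}

/-- The set `M₋` of almost surely nonpositive claim processes. -/
def Mminus (P : Measure Ω) (ℱ : Filtration (Fin (T + 1)) m0) :
    Set (Fin (T + 1) → Ω → ℝ) :=
  {c | c ∈ ClaimM ℱ ∧ ∀ t, ∀ᵐ ω ∂P, c t ω ≤ 0}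

/-- The set `C` of claim processes superhedgeable with zero cost. -/
def Cset (P : Measure Ω) (ℱ : Filtration (Fin (T + 1)) m0)
    (S : CostProcess ℱ J) (D : ConstraintProcess ℱ J) :
    Set (Fin (T + 1) → Ω → ℝ) :=
  {c | c ∈ ClaimM ℱ ∧ ∃ x : Fin (T + 1) → Ω → (J → ℝ), StronglyAdapted ℱ x ∧
    x (Fin.last T) = 0 ∧
    ∀ᵐ ω ∂P, ∀ t, x t ω ∈ D.D t ω ∧
      S.S t (x t ω - prevP x t ω) ω + (c t ω : EReal) ≤ 0}

/-- The set `M¹` of integrable claim processes. -/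
def M1 (P : Measure Ω) (ℱ : Filtration (Fin (T + 1)) m0) :
    Set (Fin (T + 1) → Ω → ℝ) :=
  {c | c ∈ ClaimM ℱ ∧ ∀ t, Integrable (c t) P}

/-- The set `M^∞` of essentially bounded claim processes. -/
def Minf (P : Measure Ω) (ℱ : Filtration (Fin (T + 1)) m0) :
    Set (Fin (T + 1) → Ω → ℝ) :=
  {c | c ∈ ClaimM ℱ ∧ ∀ t, MemLp (c t) ⊤ P}

/-- The bilinear pairing `E ∑ₜ cₜ yₜ`. -/
def pairing (P : Measure Ω) (c y : Fin (T + 1) → Ω → ℝ) : ℝ :=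
  ∫ ω, ∑ t, c t ω * y t ω ∂P

/-- The support function `σ_{C¹}(y) = sup_{c ∈ C¹} E ∑ₜ cₜ yₜ` of a set of integrable
claim processes. -/
def sigmaSup (P : Measure Ω) (A : Set (Fin (T + 1) → Ω → ℝ))
    (y : Fin (T + 1) → Ω → ℝ) : EReal :=
  sSup ((fun c => ((pairing P c y : ℝ) : EReal)) '' A)

/-- `A` is closed in probability (within the space `M` of adapted claim processes). -/
def ClosedInProb (P : Measure Ω) (ℱ : Filtration (Fin (T + 1)) m0)
    (A : Set (Fin (T + 1) → Ω → ℝ)) : Prop :=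
  ∀ cs : ℕ → Fin (T + 1) → Ω → ℝ, (∀ n, cs n ∈ A) →
    ∀ c ∈ ClaimM ℱ, (∀ t, TendstoInMeasure P (fun n => cs n t) atTop (c t)) → c ∈ A

/-- The superhedging cost `π(c) = inf {α ∈ ℝ | c - α • p ∈ C} ∈ [-∞,+∞]`. -/
def shc {Ω : Type*} {T : ℕ} (C : Set (Fin (T + 1) → Ω → ℝ))
    (p c : Fin (T + 1) → Ω → ℝ) : EReal :=
  sInf ((fun α : ℝ => (α : EReal)) '' {α : ℝ | c - α • p ∈ C})

/-! Only weak duality is involved. Since `E ∑ₜ pₜ yₜ = 1`, every `α` with `c - α p ∈ C¹` gives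
`E ∑ₜ cₜ yₜ - α ≤ σ_{C¹}(y)`, hence `E ∑ₜ cₜ yₜ - σ_{C¹}(y) ≤ π(c)` for every `c ∈ M¹`; applied to
`c + c'` this yields the subgradient inequality once `y` attains the supremum. Conversely, testing
the subgradient inequality at `c' = w - c` for `w ∈ C¹`, where `π(w) ≤ 0`, gives
`σ_{C¹}(y) ≤ E ∑ₜ cₜ yₜ - π(c)`. -/

theorem EReal.coe_eq_coe_sub_iff (r a : ℝ) (x : EReal) :
    (r : EReal) = a - x ↔ x = ((a - r : ℝ) : EReal) := by
  induction x with
  | bot => simp [-EReal.coe_sub]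
  | top => simp [-EReal.coe_sub]
  | coe x =>
    rw [← EReal.coe_sub, EReal.coe_eq_coe_iff, EReal.coe_eq_coe_iff]
    constructor <;> intro h <;> linarith

section Pairing

variable {P : Measure Ω} {c c' y : Fin (T + 1) → Ω → ℝ}

lemma integrable_sum_mul_of_memLp_top (hc : ∀ t, Integrable (c t) P)
    (hy : ∀ t, MemLp (y t) ⊤ P) : Integrable (fun ω => ∑ t, c t ω * y t ω) P :=
  integrable_finsetSum _ fun t _ => (hc t).mul_of_top_left (hy t)

lemma pairing_add (hc : ∀ t, Integrable (c t) P) (hc' : ∀ t, Integrable (c' t) P)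
    (hy : ∀ t, MemLp (y t) ⊤ P) : pairing P (c + c') y = pairing P c y + pairing P c' y := by
  simp only [pairing, Pi.add_apply, add_mul, Finset.sum_add_distrib]
  exact integral_add (integrable_sum_mul_of_memLp_top hc hy)
    (integrable_sum_mul_of_memLp_top hc' hy)

lemma pairing_sub (hc : ∀ t, Integrable (c t) P) (hc' : ∀ t, Integrable (c' t) P)
    (hy : ∀ t, MemLp (y t) ⊤ P) : pairing P (c - c') y = pairing P c y - pairing P c' y := by
  simp only [pairing, Pi.sub_apply, sub_mul, Finset.sum_sub_distrib]
  exact integral_sub (integrable_sum_mul_of_memLp_top hc hy)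
    (integrable_sum_mul_of_memLp_top hc' hy)

lemma pairing_smul (a : ℝ) : pairing P (a • c) y = a * pairing P c y := by
  simp only [pairing, Pi.smul_apply, smul_eq_mul, mul_assoc, ← Finset.mul_sum]
  exact integral_const_mul a _

end Pairing

section M1

variable {P : Measure Ω} {ℱ : Filtration (Fin (T + 1)) m0} {c c' : Fin (T + 1) → Ω → ℝ}

lemma add_mem_M1 (hc : c ∈ M1 P ℱ) (hc' : c' ∈ M1 P ℱ) : c + c' ∈ M1 P ℱ :=
  ⟨fun t => (hc.1 t).add (hc'.1 t), fun t => (hc.2 t).add (hc'.2 t)⟩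

lemma sub_mem_M1 (hc : c ∈ M1 P ℱ) (hc' : c' ∈ M1 P ℱ) : c - c' ∈ M1 P ℱ :=
  ⟨fun t => (hc.1 t).sub (hc'.1 t), fun t => (hc.2 t).sub (hc'.2 t)⟩

lemma smul_mem_M1 (a : ℝ) (hc : c ∈ M1 P ℱ) : a • c ∈ M1 P ℱ :=
  ⟨fun t => (hc.1 t).const_smul a, fun t => (hc.2 t).smul a⟩

end M1

section Shc

variable {C : Set (Fin (T + 1) → Ω → ℝ)} {p c : Fin (T + 1) → Ω → ℝ}

lemma le_shc {b : EReal} (h : ∀ α : ℝ, c - α • p ∈ C → b ≤ α) : b ≤ shc C p c :=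
  le_sInf <| by
    rintro _ ⟨α, hα, rfl⟩
    exact h α hα

lemma shc_nonpos_of_mem (hc : c ∈ C) : shc C p c ≤ 0 :=
  sInf_le ⟨0, by simpa using hc, EReal.coe_zero⟩

end Shc

section Duality

variable {P : Measure Ω} {ℱ : Filtration (Fin (T + 1)) m0} {C : Set (Fin (T + 1) → Ω → ℝ)}
  {p c w y : Fin (T + 1) → Ω → ℝ}

lemma pairing_sub_le_sigmaSup (hp : p ∈ M1 P ℱ) (hy : y ∈ Minf P ℱ) (hpy : pairing P p y = 1)
    (hw : w ∈ M1 P ℱ) {α : ℝ} (hα : w - α • p ∈ C) :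
    ((pairing P w y - α : ℝ) : EReal) ≤ sigmaSup P (C ∩ M1 P ℱ) y := by
  have hpair : pairing P (w - α • p) y = pairing P w y - α := by
    rw [pairing_sub hw.2 (smul_mem_M1 α hp).2 hy.2, pairing_smul, hpy, mul_one]
  exact le_sSup ⟨w - α • p, ⟨hα, sub_mem_M1 hw (smul_mem_M1 α hp)⟩, congrArg _ hpair⟩

lemma pairing_sub_sigmaSup_le_shc (hp : p ∈ M1 P ℱ) (hy : y ∈ Minf P ℱ)
    (hpy : pairing P p y = 1) (hw : w ∈ M1 P ℱ) :
    (pairing P w y : EReal) - sigmaSup P (C ∩ M1 P ℱ) y ≤ shc C p w :=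
  le_shc fun α hα => EReal.sub_le_of_le_add' <|
    (EReal.sub_le_iff_le_add (.inl (EReal.coe_ne_bot α)) (.inl (EReal.coe_ne_top α))).1
      (pairing_sub_le_sigmaSup hp hy hpy hw hα)

lemma sigmaSup_le_of_subgradient (hc : c ∈ M1 P ℱ) (hy : y ∈ Minf P ℱ) {r : ℝ}
    (h : ∀ c' ∈ M1 P ℱ, (pairing P c' y : EReal) ≤ shc C p (c + c') - r) :
    sigmaSup P (C ∩ M1 P ℱ) y ≤ ((pairing P c y - r : ℝ) : EReal) := by
  refine sSup_le ?_
  rintro _ ⟨w, ⟨hwC, hw⟩, rfl⟩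
  have hsub := h (w - c) (sub_mem_M1 hw hc)
  rw [add_sub_cancel, pairing_sub hw.2 hc.2 hy.2] at hsub
  have hbound : shc C p w - r ≤ ((-r : ℝ) : EReal) := by
    simpa using EReal.sub_le_sub (shc_nonpos_of_mem (p := p) hwC) le_rfl
  have : pairing P w y - pairing P c y ≤ -r := by exact_mod_cast hsub.trans hbound
  exact EReal.coe_le_coe_iff.2 (by linarith)

end Duality

theorem shc_dual_attained_iff_subgradient_general
    (P : Measure Ω) (ℱ : Filtration (Fin (T + 1)) m0)
    (S : CostProcess ℱ J) (D : ConstraintProcess ℱ J)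
    (p : Fin (T + 1) → Ω → ℝ) (hp : p ∈ M1 P ℱ)
    (c : Fin (T + 1) → Ω → ℝ) (hc : c ∈ M1 P ℱ)
    (hfin : shc (Cset P ℱ S D) p c ≠ ⊥) (hfin' : shc (Cset P ℱ S D) p c ≠ ⊤)
    (y : Fin (T + 1) → Ω → ℝ) (hy : y ∈ Minf P ℱ) (hpy : pairing P p y = 1) :
    shc (Cset P ℱ S D) p c =
      ((pairing P c y : ℝ) : EReal) - sigmaSup P (Cset P ℱ S D ∩ M1 P ℱ) y ↔
    ∀ c' ∈ M1 P ℱ,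
      ((pairing P c' y : ℝ) : EReal) ≤
        shc (Cset P ℱ S D) p (c + c') - shc (Cset P ℱ S D) p c := by
  set C := Cset P ℱ S D
  obtain ⟨r, hr⟩ : ∃ r : ℝ, shc C p c = r := ⟨_, (EReal.coe_toReal hfin' hfin).symm⟩
  have weak_duality := fun {w} => pairing_sub_sigmaSup_le_shc (C := C) (w := w) hp hy hpy
  rw [hr, EReal.coe_eq_coe_sub_iff]
  constructor
  · intro hσ c' hc'
    have hle := weak_duality (add_mem_M1 hc hc')
    rw [hσ, pairing_add hc.2 hc'.2 hy.2, ← EReal.coe_sub, add_sub_sub_cancel] at hle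
    rw [EReal.le_sub_iff_add_le (.inl (EReal.coe_ne_bot r)) (.inl (EReal.coe_ne_top r))]
    exact_mod_cast hle
  · intro h
    refine le_antisymm (sigmaSup_le_of_subgradient hc hy h) ?_
    have hle := weak_duality hc
    rw [hr, EReal.sub_le_iff_le_add (.inr (EReal.coe_ne_top r)) (.inr (EReal.coe_ne_bot r))] at hle
    exact EReal.sub_le_of_le_add' hle

/-- Proposition 9: a deflator `y ∈ M^∞` with `E ∑ₜ pₜ yₜ = 1` attains the
supremum in the dual representation of `π(c)` iff the superhedging selling price with
initial liabilities `c` dominates `c' ↦ E ∑ₜ c'ₜ yₜ` on `M¹`. -/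
theorem shc_dual_attained_iff_subgradient
    (P : Measure Ω) [IsProbabilityMeasure P] (ℱ : Filtration (Fin (T + 1)) m0)
    (hcomp : ∀ (t : Fin (T + 1)) (s : Set Ω), P s = 0 → MeasurableSet[ℱ t] s)
    (S : CostProcess ℱ J) (D : ConstraintProcess ℱ J)
    (hcl : ClosedInProb P ℱ (Cset P ℱ S D))
    (p : Fin (T + 1) → Ω → ℝ) (hp : p ∈ M1 P ℱ)
    (hpneg : -p ∈ rcone (Cset P ℱ S D)) (hppos : p ∉ rcone (Cset P ℱ S D))
    (c : Fin (T + 1) → Ω → ℝ) (hc : c ∈ M1 P ℱ)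
    (hfin : shc (Cset P ℱ S D) p c ≠ ⊥) (hfin' : shc (Cset P ℱ S D) p c ≠ ⊤)
    (y : Fin (T + 1) → Ω → ℝ) (hy : y ∈ Minf P ℱ) (hpy : pairing P p y = 1) :
    shc (Cset P ℱ S D) p c =
      ((pairing P c y : ℝ) : EReal) - sigmaSup P (Cset P ℱ S D ∩ M1 P ℱ) y ↔
    ∀ c' ∈ M1 P ℱ,
      ((pairing P c' y : ℝ) : EReal) ≤
        shc (Cset P ℱ S D) p (c + c') - shc (Cset P ℱ S D) p c :=
  shc_dual_attained_iff_subgradient_general P ℱ S D p hp c hc hfin hfin' y hy hpy
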